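/- The language of a monovisioned distributed automaton A is nonempty if and only if A accepts some pointed dipath. In particular, if A accepts a pointed ditree (T, root) with first acceptance at the root at time t, then A accepts the pointed dipath obtained by taking any directed path in T from a node at depth t to the root (pointed at the root). -/

import Mathlib

/-- A finite nonempty Σ-labeled 1-relational digraph. -/
structure DGraph (A : Type) where
  V : Type
  [finV : Finite V]
  [neV : Nonempty V]
  E : V → V → Prop
  lab : V → A

attribute [instance] DGraph.finV DGraph.neV

/-- A distributed automaton `A = (Q, ι, δ, F)` over Σ-labeled 1-relational
digraphs. -/
structure DA (A : Type) where
  Q : Type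
  [finQ : Finite Q]
  ι : A → Q
  δ : Q → Set Q → Q
  F : Set Q

attribute [instance] DA.finQ

/-- The run: `ρ_0(v) = ι(λ(v))`,
`ρ_{t+1}(v) = δ(ρ_t(v), {ρ_t(u) : (u,v) an edge})`. -/
def DA.run {A : Type} (M : DA A) (G : DGraph A) : ℕ → G.V → M.Q
  | 0, v => M.ι (G.lab v)
  | t+1, v => M.δ (M.run G t v) {q | ∃ u, G.E u v ∧ M.run G t u = q}

/-- Acceptance of a pointed digraph. -/
def DA.Accepts {A : Type} (M : DA A) (G : DGraph A) (v : G.V) : Prop :=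
  ∃ t, M.run G t v ∈ M.F

/-- `p` is a directed path in `G` from `u` to `root` (as a list of successive
nodes following the edges). -/
def IsPathTo {A : Type} (G : DGraph A) (u root : G.V) (p : List G.V) : Prop :=
  p.Chain' G.E ∧ p.head? = some u ∧ p.getLast? = some root

/-- `G` is a directed rooted tree (ditree) with root `root`: from each node
there is exactly one directed path to the root. -/
def IsDitree {A : Type} (G : DGraph A) (root : G.V) : Prop :=
  ∀ u : G.V, ∃! p : List G.V, IsPathTo G u root p

/-- The dipath whose node labels spell the nonempty word `w`. -/
def pathGraph {A : Type} (w : List A) (h : w ≠ []) : DGraph A where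
  V := Fin w.length
  neV := ⟨⟨0, List.length_pos_iff.mpr h⟩⟩
  E := fun u v => u.val + 1 = v.val
  lab := fun i => w.get i

/-- The last node of the dipath spelling `w`. -/
def lastNode {A : Type} (w : List A) (h : w ≠ []) : (pathGraph w h).V :=
  ⟨w.length - 1, by have := List.length_pos_iff.mpr h; omega⟩

/-- A monovisioned distributed automaton: it has a rejecting sink state `⊥ ∉ F`
with `δ(q,N) = ⊥` whenever `|N| > 1` or `⊥ ∈ N` or `q = ⊥`. -/
structure MonoDA (A : Type) extends DA A where
  bot : Q
  bot_not_accept : bot ∉ F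
  sink : ∀ (q : Q) (N : Set Q),
    (¬ N.Subsingleton ∨ bot ∈ N ∨ q = bot) → δ q N = bot

section Aux

variable {A : Type} (M : MonoDA A)

lemma mono_bot_mono (G : DGraph A) {s t : ℕ} (hst : s ≤ t) (v : G.V)
    (h : M.run G s v = M.bot) : M.run G t v = M.bot := by
  induction t with
  | zero =>
    have : s = 0 := by omega
    subst this; exact h
  | succ t ih =>
    rcases Nat.lt_or_ge s (t+1) with hs | hs
    · have := ih (by omega)
      show M.δ _ _ = _
      exact M.sink _ _ (Or.inr (Or.inr this))
    · have : s = t + 1 := by omega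
      subst this; exact h

lemma mono_notbot (G : DGraph A) (t : ℕ) (v : G.V)
    (h : M.run G (t+1) v ≠ M.bot) :
    M.run G t v ≠ M.bot ∧
    ({q | ∃ u, G.E u v ∧ M.run G t u = q} : Set M.Q).Subsingleton ∧
    M.bot ∉ ({q | ∃ u, G.E u v ∧ M.run G t u = q} : Set M.Q) := by
  by_contra hc
  push_neg at hc
  apply h
  show M.δ _ _ = _
  apply M.sink
  by_cases h1 : M.run G t v = M.bot
  · exact Or.inr (Or.inr h1)
  by_cases h2 : M.bot ∈ ({q | ∃ u, G.E u v ∧ M.run G t u = q} : Set M.Q)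
  · exact Or.inr (Or.inl h2)
  · exact Or.inl (fun hs => h2 (hc h1 hs))

/-- Run on an extended path graph restricts to the run on the shorter one. -/
lemma mono_path_restrict (w' : List A) (h' : w' ≠ []) (a : A)
    (h : w' ++ [a] ≠ []) (s : ℕ) (i : Fin w'.length) :
    M.run (pathGraph (w' ++ [a]) h) s
      ⟨i.val, by simp⟩ = M.run (pathGraph w' h') s i := by
  induction s generalizing i with
  | zero =>
    show M.ι _ = M.ι _
    congr 1
    show (w' ++ [a]).get ⟨i.val, _⟩ = w'.get i
    simp [List.getElem_append_left i.isLt]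
  | succ s ih =>
    show M.δ _ _ = M.δ _ _
    congr 1
    · exact ih i
    · ext q
      constructor
      · rintro ⟨u, hu, rfl⟩
        have hu' : u.val + 1 = i.val := hu
        have hlt : u.val < w'.length := by omega
        refine ⟨⟨u.val, hlt⟩, hu', ?_⟩
        exact (ih ⟨u.val, hlt⟩).symm
      · rintro ⟨u, hu, rfl⟩
        have hu' : u.val + 1 = i.val := hu
        refine ⟨⟨u.val, by simp; omega⟩, hu', ?_⟩
        exact ih ⟨u.val, u.isLt⟩

/-- Key lemma: if the state at `v` at time `t` is not `⊥`, there is a dipath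
whose run at the last node agrees with the run at `v` up to time `t`. -/
lemma mono_key (G : DGraph A) : ∀ (t : ℕ) (v : G.V), M.run G t v ≠ M.bot →
    ∃ (w : List A) (h : w ≠ []), ∀ s ≤ t,
      M.run (pathGraph w h) s (lastNode w h) = M.run G s v := by
  intro t
  induction t with
  | zero =>
    intro v _
    refine ⟨[G.lab v], by simp, ?_⟩
    intro s hs
    interval_cases s
    rfl
  | succ t ih =>
    intro v h1
    obtain ⟨h2, hN, hb⟩ := mono_notbot M G t v h1
    by_cases hex : ∃ u, G.E u v
    · obtain ⟨u, hu⟩ := hex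
      -- neighborhood is always the singleton of the run at u, for s ≤ t
      have hpre : ∀ s ≤ t,
          ({q | ∃ x, G.E x v ∧ M.run G s x = q} : Set M.Q) = {M.run G s u} := by
        intro s hs
        have hnb : M.run G (s+1) v ≠ M.bot := by
          intro hc
          exact h1 (mono_bot_mono M G (by omega) v hc)
        obtain ⟨_, hNs, _⟩ := mono_notbot M G s v hnb
        apply Set.eq_singleton_iff_unique_mem.mpr
        exact ⟨⟨u, hu, rfl⟩, fun q hq => hNs hq ⟨u, hu, rfl⟩⟩
      have hubot : M.run G t u ≠ M.bot := by
        intro hc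
        exact hb ⟨u, hu, hc ▸ rfl⟩
      obtain ⟨w', h', hw'⟩ := ih u hubot
      have hlen : 0 < w'.length := List.length_pos_iff.mpr h'
      have h : w' ++ [G.lab v] ≠ [] := by simp
      refine ⟨w' ++ [G.lab v], h, ?_⟩
      have hlast : (lastNode (w' ++ [G.lab v]) h).val = w'.length := by
        simp [lastNode]
      intro s
      induction s with
      | zero =>
        intro _
        show M.ι _ = M.ι _
        congr 1
        show (w' ++ [G.lab v]).get _ = G.lab v
        have : (lastNode (w' ++ [G.lab v]) h) =
            ⟨w'.length, by simp⟩ := Fin.ext hlast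
        rw [this]
        simp
      | succ s ihs =>
        intro hs
        have hs' : s ≤ t := by omega
        show M.δ _ _ = M.δ _ _
        rw [hpre s hs']
        congr 1
        · exact ihs (by omega)
        · -- predecessor set of the last node
          have : ({q | ∃ x, (pathGraph (w' ++ [G.lab v]) h).E x
                (lastNode (w' ++ [G.lab v]) h) ∧
                M.run (pathGraph (w' ++ [G.lab v]) h) s x = q} : Set M.Q)
              = {M.run G s u} := by
            ext q
            constructor
            · rintro ⟨x, hx, rfl⟩
              have hx' : x.val + 1 = (lastNode (w' ++ [G.lab v]) h).val := hx
              rw [hlast] at hx'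
              have hxv : x.val = w'.length - 1 := by omega
              have hxlt : x.val < w'.length := by omega
              have hr := mono_path_restrict M w' h' (G.lab v) h s ⟨x.val, hxlt⟩
              have hxeq : x = (⟨x.val, by simp; omega⟩ :
                  Fin (w' ++ [G.lab v]).length) := rfl
              rw [hxeq, hr]
              have : (⟨x.val, hxlt⟩ : Fin w'.length) = lastNode w' h' :=
                Fin.ext (by simp [lastNode, hxv])
              rw [this, hw' s hs']
              rfl
            · rintro rfl
              refine ⟨⟨w'.length - 1, by simp⟩, ?_, ?_⟩
              · show w'.length - 1 + 1 = (lastNode (w' ++ [G.lab v]) h).val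
                rw [hlast]; omega
              · have hr := mono_path_restrict M w' h' (G.lab v) h s
                  ⟨w'.length - 1, by omega⟩
                have : (⟨w'.length - 1, by omega⟩ : Fin w'.length) =
                    lastNode w' h' := rfl
                rw [this] at hr
                rw [← hw' s hs']
                exact hr
          rw [this]
    · -- no predecessors at all: take the single-node path
      push_neg at hex
      have hne : [G.lab v] ≠ [] := by simp
      refine ⟨[G.lab v], hne, ?_⟩
      rintro s -
      induction s with
      | zero => rfl
      | succ s ihs =>
        show M.δ _ _ = M.δ _ _
        have e1 : ({q | ∃ x, G.E x v ∧ M.run G s x = q} : Set M.Q) = ∅ := by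
          ext q; simp only [Set.mem_setOf_eq, Set.mem_empty_iff_false,
            iff_false]
          rintro ⟨x, hx, _⟩
          exact hex x hx
        have e2 : ({q | ∃ x, (pathGraph [G.lab v] hne).E x
            (lastNode [G.lab v] hne) ∧
            M.run (pathGraph [G.lab v] hne) s x = q} : Set M.Q) = ∅ := by
          ext q; simp only [Set.mem_setOf_eq, Set.mem_empty_iff_false,
            iff_false]
          rintro ⟨x, hx, _⟩
          have : x.val + 1 = 0 := hx
          omega
        rw [e1, e2, ihs]

end Aux

/-- the language of a monovisioned distributed automaton is
nonempty iff it accepts some pointed dipath (pointed at the last node). -/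
theorem mono_nonempty_iff_dipath (A : Type) (M : MonoDA A) :
    (∃ (G : DGraph A) (v : G.V), M.Accepts G v) ↔
      ∃ (w : List A) (h : w ≠ []),
        M.Accepts (pathGraph w h) (lastNode w h) := by
  constructor
  · rintro ⟨G, v, t, ht⟩
    have hnb : M.run G t v ≠ M.bot := fun hc => M.bot_not_accept (hc ▸ ht)
    obtain ⟨w, h, hw⟩ := mono_key M G t v hnb
    exact ⟨w, h, t, by rw [hw t le_rfl]; exact ht⟩
  · rintro ⟨w, h, hacc⟩
    exact ⟨pathGraph w h, lastNode w h, hacc⟩
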